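/- For every timelike vector V (i.e. g(V,V) < 0), the vector P_ν = V^α τ_{αν} obtained by contracting V with the Maxwell stress-energy tensor is non-spacelike: P_α P^α ≤ 0. -/

import Mathlib

/-!
Writing an antisymmetric `F` through its electric part `e` and magnetic part `b`, a direct
computation in components gives `τ η τᵀ = ¼ (τ·τ) η` with `τ·τ = (|e|² - |b|²)² + 4 (e·b)² ≥ 0`.
Hence `P·P = Vᵀ τ η τᵀ V = ¼ (τ·τ) g(V, V) ≤ 0` for timelike `V`.
-/

open Finset

/-- The Minkowski metric of signature (−,+,+,+) on ℝ⁴ (orthonormal coordinates). -/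
noncomputable def eta : Matrix (Fin 4) (Fin 4) ℝ :=
  Matrix.diagonal (fun i => if i = 0 then -1 else 1)

/-- Maxwell stress-energy tensor τ_{αβ}. -/
noncomputable def tauEM (F : Matrix (Fin 4) (Fin 4) ℝ) : Matrix (Fin 4) (Fin 4) ℝ :=
  fun α β => (∑ γ, ∑ δ, F α γ * eta γ δ * F β δ)
    - (1/4) * eta α β *
      (∑ γ, ∑ δ, ∑ γ', ∑ δ', eta γ γ' * eta δ δ' * F γ' δ' * F γ δ)

open Matrix

theorem Matrix.sum_sum_mul_mul_eq_dotProduct_mulVec {n R : Type*} [Fintype n] [CommSemiring R]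
    (M : Matrix n n R) (x : n → R) :
    ∑ i, ∑ j, M i j * x i * x j = x ⬝ᵥ (M *ᵥ x) := by
  simp only [dotProduct, mulVec, Finset.mul_sum]
  exact sum_congr rfl fun i _ => sum_congr rfl fun j _ => by ring

theorem Matrix.sum_sum_mul_vecMul_mul_vecMul {n R : Type*} [Fintype n] [CommSemiring R]
    (G A : Matrix n n R) (v : n → R) :
    ∑ i, ∑ j, G i j * (v ᵥ* A) i * (v ᵥ* A) j = ∑ i, ∑ j, (A * G * Aᵀ) i j * v i * v j := by
  rw [sum_sum_mul_mul_eq_dotProduct_mulVec, sum_sum_mul_mul_eq_dotProduct_mulVec,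
    ← dotProduct_mulVec, ← mulVec_transpose, mulVec_mulVec, mulVec_mulVec, Matrix.mul_assoc]

/-- `F₀ᵢ = eᵢ` and `Fᵢⱼ = εᵢⱼₖ bₖ`. -/
def fieldStrength (e₁ e₂ e₃ b₁ b₂ b₃ : ℝ) : Matrix (Fin 4) (Fin 4) ℝ :=
  !![0, e₁, e₂, e₃; -e₁, 0, b₃, -b₂; -e₂, -b₃, 0, b₁; -e₃, b₂, -b₁, 0]

theorem eq_fieldStrength_of_antisymm {F : Matrix (Fin 4) (Fin 4) ℝ}
    (hF : ∀ α β, F α β = - F β α) :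
    F = fieldStrength (F 0 1) (F 0 2) (F 0 3) (F 2 3) (F 3 1) (F 1 2) := by
  have hdiag : ∀ α, F α α = 0 := fun α => by linarith [hF α α]
  ext α β
  fin_cases α <;> fin_cases β <;>
    simp [fieldStrength, hdiag, hF 1 0, hF 2 0, hF 3 0, hF 2 1, hF 3 1, hF 3 2]

/-- The full contraction `τ^{γδ} τ_{γδ}`. -/
noncomputable def tauEMSq (F : Matrix (Fin 4) (Fin 4) ℝ) : ℝ :=
  ∑ γ, ∑ δ, ∑ γ', ∑ δ', eta γ γ' * eta δ δ' * tauEM F γ' δ' * tauEM F γ δ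

theorem tauEMSq_fieldStrength (e₁ e₂ e₃ b₁ b₂ b₃ : ℝ) :
    tauEMSq (fieldStrength e₁ e₂ e₃ b₁ b₂ b₃) =
      (e₁ ^ 2 + e₂ ^ 2 + e₃ ^ 2 - b₁ ^ 2 - b₂ ^ 2 - b₃ ^ 2) ^ 2
        + 4 * (e₁ * b₁ + e₂ * b₂ + e₃ * b₃) ^ 2 := by
  simp [tauEMSq, tauEM, eta, fieldStrength, Fin.sum_univ_four, diagonal_apply]
  ring

theorem tauEM_mul_eta_mul_transpose_fieldStrength (e₁ e₂ e₃ b₁ b₂ b₃ : ℝ) :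
    tauEM (fieldStrength e₁ e₂ e₃ b₁ b₂ b₃) * eta * (tauEM (fieldStrength e₁ e₂ e₃ b₁ b₂ b₃))ᵀ =
      (tauEMSq (fieldStrength e₁ e₂ e₃ b₁ b₂ b₃) / 4) • eta := by
  rw [tauEMSq_fieldStrength]
  ext α β
  fin_cases α <;> fin_cases β <;>
    simp [tauEM, eta, fieldStrength, Fin.sum_univ_four, diagonal_apply, mul_apply] <;> ring

theorem tauEMSq_nonneg {F : Matrix (Fin 4) (Fin 4) ℝ} (hF : ∀ α β, F α β = - F β α) :
    0 ≤ tauEMSq F := by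
  rw [eq_fieldStrength_of_antisymm hF, tauEMSq_fieldStrength]
  positivity

theorem tauEM_mul_eta_mul_transpose {F : Matrix (Fin 4) (Fin 4) ℝ}
    (hF : ∀ α β, F α β = - F β α) :
    tauEM F * eta * (tauEM F)ᵀ = (tauEMSq F / 4) • eta := by
  rw [eq_fieldStrength_of_antisymm hF]
  exact tauEM_mul_eta_mul_transpose_fieldStrength ..

/-- For any timelike vector V, the covector P_ν = V^α τ_{αν} is non-spacelike. -/
theorem tau_contract_timelike_nonspacelike (F : Matrix (Fin 4) (Fin 4) ℝ)
    (hF : ∀ α β, F α β = - F β α) (V : Fin 4 → ℝ)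
    (hV : ∑ α, ∑ β, eta α β * V α * V β < 0) :
    ∑ ν, ∑ ν', eta ν ν' * (∑ α, V α * tauEM F α ν) * (∑ β, V β * tauEM F β ν') ≤ 0 := by
  change ∑ ν, ∑ ν', eta ν ν' * (V ᵥ* tauEM F) ν * (V ᵥ* tauEM F) ν' ≤ 0
  have hP : ∑ ν, ∑ ν', eta ν ν' * (V ᵥ* tauEM F) ν * (V ᵥ* tauEM F) ν'
      = tauEMSq F / 4 * ∑ α, ∑ β, eta α β * V α * V β := by
    rw [sum_sum_mul_vecMul_mul_vecMul, tauEM_mul_eta_mul_transpose hF]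
    simp only [Matrix.smul_apply, smul_eq_mul, mul_sum, mul_assoc]
  rw [hP]
  exact mul_nonpos_of_nonneg_of_nonpos (div_nonneg (tauEMSq_nonneg hF) (by norm_num)) hV.le
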